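/- (One-step expected Lyapunov decrease at the first successful transmission after a switch.) Let α be a {0,1}-valued random variable with E[α] = ᾱ. Fix x̃ ∈ ℝ^{2n} and x_a ∈ ℝⁿ with ‖x_a‖² ≤ γ̄² (γ̄ > 0), and define the random vector X⁺ = Ã¹x̃ − (α−ᾱ)Ã²x̃ + α·Ã³x_a. If Ψ ⪯ 0, then E[(X⁺)ᵀP X⁺] ≤ (1−ρ_s)·x̃ᵀP x̃ + εγ̄². -/

import Mathlib

open Matrix MeasureTheory ProbabilityTheory

noncomputable section

/-- `M ⪯ 0`: the symmetric part of `M` is negative semidefinite. -/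
def SymNegSemidef {l : Type*} [Fintype l] (M : Matrix l l ℝ) : Prop :=
  (-(((1 : ℝ) / 2) • (M + Mᵀ))).PosSemidef

/-- `Ã¹ = [[A + (1-ᾱ)BK, 0],[(1-ᾱ)I, 0]]`. -/
def blkAt1 (n : ℕ) (A BK : Matrix (Fin n) (Fin n) ℝ) (aB : ℝ) :
    Matrix (Fin n ⊕ Fin n) (Fin n ⊕ Fin n) ℝ :=
  fromBlocks (A + (1 - aB) • BK) 0 ((1 - aB) • (1 : Matrix (Fin n) (Fin n) ℝ)) 0

/-- `Ã² = [[BK, 0],[I, 0]]`. -/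
def blkAt2 (n : ℕ) (BK : Matrix (Fin n) (Fin n) ℝ) :
    Matrix (Fin n ⊕ Fin n) (Fin n ⊕ Fin n) ℝ :=
  fromBlocks BK 0 (1 : Matrix (Fin n) (Fin n) ℝ) 0

/-- `Ã³ = [[BK],[I]]` (block column). -/
def blkAt3 (n : ℕ) (BK : Matrix (Fin n) (Fin n) ℝ) :
    Matrix (Fin n ⊕ Fin n) (Fin n) ℝ :=
  Matrix.of (Sum.elim (fun i => BK i) (fun i => (1 : Matrix (Fin n) (Fin n) ℝ) i))

/-- The matrix `Ψ` of the resynchronization LMI. -/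
def PsiMat (n : ℕ) (A BK : Matrix (Fin n) (Fin n) ℝ)
    (P : Matrix (Fin n ⊕ Fin n) (Fin n ⊕ Fin n) ℝ) (aB eps rhoS : ℝ) :
    Matrix ((Fin n ⊕ Fin n) ⊕ Fin n) ((Fin n ⊕ Fin n) ⊕ Fin n) ℝ :=
  let aT : ℝ := aB * (1 - aB)
  let At1 := blkAt1 n A BK aB
  let At2 := blkAt2 n BK
  let At3 := blkAt3 n BK
  let Psi11 : Matrix (Fin n ⊕ Fin n) (Fin n ⊕ Fin n) ℝ :=
    At1ᵀ * P * At1 + aT • (At2ᵀ * P * At2) - (1 - rhoS) • P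
  let Psi12 : Matrix (Fin n ⊕ Fin n) (Fin n) ℝ :=
    aB • (At1ᵀ * P * At3) - aT • (At2ᵀ * P * At3)
  let Psi22 : Matrix (Fin n) (Fin n) ℝ :=
    (aT + aB ^ 2) • (At3ᵀ * P * At3) - eps • (1 : Matrix (Fin n) (Fin n) ℝ)
  fromBlocks Psi11 Psi12 Psi12ᵀ Psi22

/-! Since `α ∈ {0, 1}`, `E f(α) = (1 - ᾱ) f(0) + ᾱ f(1)` for every `f`. Writing
`X⁺ = u + α w` with `u = Ã¹x̃ + ᾱÃ²x̃` and `w = Ã³x_a - Ã²x̃`, the expected Lyapunov value is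
therefore `(1 - ᾱ) uᵀPu + ᾱ (u + w)ᵀP(u + w)`, and expanding (using `Pᵀ = P`) shows that this is
exactly `zᵀΨz + (1 - ρ_s) x̃ᵀPx̃ + ε ‖x_a‖²` for `z = (x̃, x_a)`. Hence `Ψ ⪯ 0` gives the bound. -/

theorem integral_comp_of_forall_eq_zero_or_eq_one {Ω : Type*} [MeasurableSpace Ω]
    {μ : Measure Ω} [IsProbabilityMeasure μ] {α : Ω → ℝ} (hαm : Measurable α)
    (hα01 : ∀ ω, α ω = 0 ∨ α ω = 1) (f : ℝ → ℝ) :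
    ∫ ω, f (α ω) ∂μ = (1 - ∫ ω, α ω ∂μ) * f 0 + (∫ ω, α ω ∂μ) * f 1 := by
  have hf : ∀ ω, f (α ω) = f 0 + (f 1 - f 0) * α ω := by
    intro ω
    rcases hα01 ω with h | h <;> simp [h]
  have hα : Integrable α μ :=
    (integrable_const (1 : ℝ)).mono' hαm.aestronglyMeasurable
      (ae_of_all _ fun ω => by rcases hα01 ω with h | h <;> simp [h])
  simp_rw [hf]
  rw [integral_add (integrable_const _) (hα.const_mul _), integral_const, integral_const_mul]
  simp only [probReal_univ, one_smul]
  ring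

theorem SymNegSemidef.dotProduct_mulVec_nonpos {l : Type*} [Fintype l] {M : Matrix l l ℝ}
    (hM : SymNegSemidef M) (z : l → ℝ) : z ⬝ᵥ (M *ᵥ z) ≤ 0 := by
  have h := hM.dotProduct_mulVec_nonneg z
  simp only [star_trivial, neg_mulVec, smul_mulVec, add_mulVec, dotProduct_neg,
    dotProduct_smul, dotProduct_add, dotProduct_transpose_mulVec, smul_eq_mul] at h
  linarith

theorem sumElim_dotProduct_fromBlocks_mulVec_sumElim {R l m : Type*} [CommSemiring R]
    [Fintype l] [Fintype m] (A : Matrix l l R) (B : Matrix l m R) (D : Matrix m m R)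
    (x : l → R) (y : m → R) :
    Sum.elim x y ⬝ᵥ (fromBlocks A B Bᵀ D *ᵥ Sum.elim x y)
      = x ⬝ᵥ (A *ᵥ x) + 2 * (x ⬝ᵥ (B *ᵥ y)) + y ⬝ᵥ (D *ᵥ y) := by
  rw [fromBlocks_mulVec, sumElim_dotProduct_sumElim]
  simp only [Sum.elim_comp_inl, Sum.elim_comp_inr, dotProduct_add, dotProduct_transpose_mulVec]
  ring

theorem dotProduct_transpose_mul_mul_mulVec {R k l m : Type*} [CommSemiring R] [Fintype k]
    [Fintype l] [Fintype m] (P : Matrix k k R) (M : Matrix k l R) (N : Matrix k m R)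
    (x : l → R) (y : m → R) :
    x ⬝ᵥ ((Mᵀ * P * N) *ᵥ y) = (M *ᵥ x) ⬝ᵥ (P *ᵥ (N *ᵥ y)) := by
  rw [← mulVec_mulVec, ← mulVec_mulVec, dotProduct_transpose_mulVec, dotProduct_comm]

theorem sumElim_dotProduct_PsiMat_mulVec_sumElim {n : ℕ} {A BK : Matrix (Fin n) (Fin n) ℝ}
    {P : Matrix (Fin n ⊕ Fin n) (Fin n ⊕ Fin n) ℝ} (hP : P.IsSymm) (aB eps rhoS : ℝ)
    (x : Fin n ⊕ Fin n → ℝ) (y : Fin n → ℝ) :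
    let u := blkAt1 n A BK aB *ᵥ x + aB • (blkAt2 n BK *ᵥ x)
    let w := blkAt3 n BK *ᵥ y - blkAt2 n BK *ᵥ x
    Sum.elim x y ⬝ᵥ (PsiMat n A BK P aB eps rhoS *ᵥ Sum.elim x y)
      = (1 - aB) * (u ⬝ᵥ (P *ᵥ u)) + aB * ((u + w) ⬝ᵥ (P *ᵥ (u + w)))
        - (1 - rhoS) * (x ⬝ᵥ (P *ᵥ x)) - eps * (y ⬝ᵥ y) := by
  intro u w
  have hcomm : ∀ v v', v' ⬝ᵥ (P *ᵥ v) = v ⬝ᵥ (P *ᵥ v') := fun v v' => by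
    rw [← dotProduct_transpose_mulVec, hP.eq]
  simp only [PsiMat, sumElim_dotProduct_fromBlocks_mulVec_sumElim, u, w]
  simp only [add_mulVec, sub_mulVec, smul_mulVec, one_mulVec, mulVec_add, mulVec_sub,
    mulVec_smul, dotProduct_add, dotProduct_sub, add_dotProduct, sub_dotProduct,
    dotProduct_smul, smul_dotProduct, smul_eq_mul, dotProduct_transpose_mul_mul_mulVec]
  generalize blkAt1 n A BK aB *ᵥ x = v₁, blkAt2 n BK *ᵥ x = v₂, blkAt3 n BK *ᵥ y = v₃
  rw [hcomm v₁ v₂, hcomm v₁ v₃, hcomm v₂ v₃]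
  ring

theorem stmt14_general (n r : ℕ) (A : Matrix (Fin n) (Fin n) ℝ) (B : Matrix (Fin n) (Fin r) ℝ)
    (K : Matrix (Fin r) (Fin n) ℝ)
    {Ω : Type*} [MeasurableSpace Ω] (μ : Measure Ω) [IsProbabilityMeasure μ]
    (α : Ω → ℝ) (hαm : Measurable α) (hα01 : ∀ ω, α ω = 0 ∨ α ω = 1)
    (alphaBar : ℝ) (hαmean : ∫ ω, α ω ∂μ = alphaBar)
    (P : Matrix (Fin n ⊕ Fin n) (Fin n ⊕ Fin n) ℝ) (hP : P.PosDef)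
    (eps rhoS gammaBar : ℝ) (heps : 0 < eps)
    (xt : Fin n ⊕ Fin n → ℝ) (xa : Fin n → ℝ) (hxa : xa ⬝ᵥ xa ≤ gammaBar ^ 2)
    (hPsi : SymNegSemidef (PsiMat n A (B * K) P alphaBar eps rhoS))
    (Xplus : Ω → Fin n ⊕ Fin n → ℝ)
    (hXplus : ∀ ω, Xplus ω
      = blkAt1 n A (B * K) alphaBar *ᵥ xt
        - (α ω - alphaBar) • (blkAt2 n (B * K) *ᵥ xt)
        + α ω • (blkAt3 n (B * K) *ᵥ xa)) :
    ∫ ω, Xplus ω ⬝ᵥ (P *ᵥ Xplus ω) ∂μ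
      ≤ (1 - rhoS) * (xt ⬝ᵥ (P *ᵥ xt)) + eps * gammaBar ^ 2 := by
  set u := blkAt1 n A (B * K) alphaBar *ᵥ xt + alphaBar • (blkAt2 n (B * K) *ᵥ xt)
  set w := blkAt3 n (B * K) *ᵥ xa - blkAt2 n (B * K) *ᵥ xt
  have hX : ∀ ω, Xplus ω = u + α ω • w := fun ω => by rw [hXplus]; module
  have hE : ∫ ω, Xplus ω ⬝ᵥ (P *ᵥ Xplus ω) ∂μ
      = (1 - alphaBar) * (u ⬝ᵥ (P *ᵥ u)) + alphaBar * ((u + w) ⬝ᵥ (P *ᵥ (u + w))) := by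
    simp_rw [hX]
    simpa only [zero_smul, add_zero, one_smul, hαmean] using
      integral_comp_of_forall_eq_zero_or_eq_one (μ := μ) hαm hα01
        fun t => (u + t • w) ⬝ᵥ (P *ᵥ (u + t • w))
  have hLMI := hPsi.dotProduct_mulVec_nonpos (Sum.elim xt xa)
  rw [sumElim_dotProduct_PsiMat_mulVec_sumElim (isHermitian_iff_isSymm.mp hP.isHermitian)] at hLMI
  linarith [mul_le_mul_of_nonneg_left hxa heps.le]

/-- One-step expected Lyapunov decrease at the first successful
transmission after a switch: with `X⁺ = Ã¹x̃ - (α-ᾱ)Ã²x̃ + α Ã³x_a`, if `Ψ ⪯ 0` and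
`‖x_a‖² ≤ γ̄²` then `E[(X⁺)ᵀPX⁺] ≤ (1-ρₛ) x̃ᵀPx̃ + εγ̄²`. -/
theorem stmt14 (n r : ℕ) (A : Matrix (Fin n) (Fin n) ℝ) (B : Matrix (Fin n) (Fin r) ℝ)
    (K : Matrix (Fin r) (Fin n) ℝ)
    {Ω : Type*} [MeasurableSpace Ω] (μ : Measure Ω) [IsProbabilityMeasure μ]
    (α : Ω → ℝ) (hαm : Measurable α) (hα01 : ∀ ω, α ω = 0 ∨ α ω = 1)
    (alphaBar : ℝ) (hαmean : ∫ ω, α ω ∂μ = alphaBar)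
    (P : Matrix (Fin n ⊕ Fin n) (Fin n ⊕ Fin n) ℝ) (hP : P.PosDef)
    (eps rhoS gammaBar : ℝ) (heps : 0 < eps) (hrhoS : 0 < rhoS ∧ rhoS < 1)
    (hgamma : 0 < gammaBar)
    (xt : Fin n ⊕ Fin n → ℝ) (xa : Fin n → ℝ) (hxa : xa ⬝ᵥ xa ≤ gammaBar ^ 2)
    (hPsi : SymNegSemidef (PsiMat n A (B * K) P alphaBar eps rhoS))
    (Xplus : Ω → Fin n ⊕ Fin n → ℝ)
    (hXplus : ∀ ω, Xplus ω
      = blkAt1 n A (B * K) alphaBar *ᵥ xt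
        - (α ω - alphaBar) • (blkAt2 n (B * K) *ᵥ xt)
        + α ω • (blkAt3 n (B * K) *ᵥ xa)) :
    ∫ ω, Xplus ω ⬝ᵥ (P *ᵥ Xplus ω) ∂μ
      ≤ (1 - rhoS) * (xt ⬝ᵥ (P *ᵥ xt)) + eps * gammaBar ^ 2 :=
  stmt14_general n r A B K μ α hαm hα01 alphaBar hαmean P hP eps rhoS gammaBar heps xt xa hxa hPsi
    Xplus hXplus

end
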